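/- Let F be a Veltman frame and k ≥ 0. If G_{2k}(x,y,z) holds, then for any forcing relation ⊩ on F such that x ⊩ Y_k, x R^{C_k}_⊩ y, and z ⊩ X_{k-1}, we also have z ⊩ □C_k ∧ (E_k ▷ A_{k-1}) ∧ (E_k ▷ Z_{k-1}). -/
import Mathlib


/-- Formulas of interpretability logic: propositional variables, ⊥, →, □, ▷. -/
inductive ILForm : Type
  | var : ℕ → ILForm
  | bot : ILForm
  | impl : ILForm → ILForm → ILForm
  | box : ILForm → ILForm
  | rhd : ILForm → ILForm → ILForm
  deriving DecidableEq

namespace ILForm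

def neg (A : ILForm) : ILForm := impl A bot
def top : ILForm := neg bot
def conj (A B : ILForm) : ILForm := neg (impl A (neg B))
def disj (A B : ILForm) : ILForm := impl (neg A) B
def dia (A : ILForm) : ILForm := neg (box (neg A))

end ILForm

infixr:30 " ⟹ " => ILForm.impl
infixl:65 " ⋀ " => ILForm.conj
infixl:64 " ⋁ " => ILForm.disj
infix:50 " ▷ " => ILForm.rhd
prefix:70 "□" => ILForm.box
prefix:70 "◇" => ILForm.dia
prefix:70 "∼" => ILForm.neg

/-- Propositional evaluation of a formula, treating boxed and ▷-formulas
(and variables) as atoms evaluated by `g`.  A formula is an instance of a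
propositional tautology iff it evaluates to `true` under every such `g`. -/
def ILForm.evalProp (g : ILForm → Bool) : ILForm → Bool
  | .bot => false
  | .impl a b => !(ILForm.evalProp g a) || ILForm.evalProp g b
  | f => g f

/-- Hilbert-style provability in the interpretability logic IL extended with
an additional set `Ax` of axioms. -/
inductive ILProv (Ax : Set ILForm) : ILForm → Prop
  | ax {A : ILForm} : A ∈ Ax → ILProv Ax A
  | taut {A : ILForm} : (∀ g : ILForm → Bool, A.evalProp g = true) → ILProv Ax A
  | L1 (A B : ILForm) : ILProv Ax ((□(A ⟹ B)) ⟹ ((□A) ⟹ (□B)))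
  | L2 (A : ILForm) : ILProv Ax ((□A) ⟹ (□□A))
  | L3 (A : ILForm) : ILProv Ax ((□((□A) ⟹ A)) ⟹ (□A))
  | J1 (A B : ILForm) : ILProv Ax ((□(A ⟹ B)) ⟹ (A ▷ B))
  | J2 (A B C : ILForm) : ILProv Ax (((A ▷ B) ⋀ (B ▷ C)) ⟹ (A ▷ C))
  | J3 (A B C : ILForm) : ILProv Ax (((A ▷ C) ⋀ (B ▷ C)) ⟹ ((A ⋁ B) ▷ C))
  | J4 (A B : ILForm) : ILProv Ax ((A ▷ B) ⟹ ((◇A) ⟹ (◇B)))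
  | J5 (A : ILForm) : ILProv Ax ((◇A) ▷ A)
  | mp {A B : ILForm} : ILProv Ax (A ⟹ B) → ILProv Ax A → ILProv Ax B
  | nec {A : ILForm} : ILProv Ax A → ILProv Ax (□A)

/-- Substitution of formulas for propositional variables. -/
def ILForm.substVar (σ : ℕ → ILForm) : ILForm → ILForm
  | .var n => σ n
  | .bot => .bot
  | .impl a b => .impl (ILForm.substVar σ a) (ILForm.substVar σ b)
  | .box a => .box (ILForm.substVar σ a)
  | .rhd a b => .rhd (ILForm.substVar σ a) (ILForm.substVar σ b)

/-- All substitution instances of a modal scheme. -/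
def instancesOf (A : ILForm) : Set ILForm := {B | ∃ σ : ℕ → ILForm, B = ILForm.substVar σ A}

/-- Helper for simultaneous replacement of subformula occurrences. -/
def ILForm.hit (ps : List (ILForm × ILForm)) (f : ILForm) : Option ILForm :=
  (ps.find? fun pq => decide (pq.1 = f)).map (·.2)

/-- Simultaneous replacement of (outermost) occurrences of the patterns
`p` by the corresponding `q`, for `(p,q)` in the list `ps`. -/
def ILForm.replL (ps : List (ILForm × ILForm)) : ILForm → ILForm
  | .var n => (ILForm.hit ps (.var n)).getD (.var n)
  | .bot => (ILForm.hit ps .bot).getD .bot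
  | .impl a b =>
      (ILForm.hit ps (.impl a b)).getD (.impl (ILForm.replL ps a) (ILForm.replL ps b))
  | .box a => (ILForm.hit ps (.box a)).getD (.box (ILForm.replL ps a))
  | .rhd a b =>
      (ILForm.hit ps (.rhd a b)).getD (.rhd (ILForm.replL ps a) (ILForm.replL ps b))

/-- The placeholder variables `A_n`, `B_n`, `C_n`, `E_n`. -/
def Av (n : ℕ) : ILForm := .var (4*n)
def Bv (n : ℕ) : ILForm := .var (4*n+1)
def Cv (n : ℕ) : ILForm := .var (4*n+2)
def Ev (n : ℕ) : ILForm := .var (4*n+3)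

/-- The slim series `R_n`, defined by the substitutions of the paper:
`R_0 := A_0▷B_0 → ¬(A_0▷¬C_0) ▷ B_0∧□C_0`;
`R_{2n+1} := R_{2n}[¬(A_n▷¬C_n)/¬(A_n▷¬C_n)∧(E_{n+1}▷◇A_{n+1});
                    B_n∧□C_n/B_n∧□C_n∧(E_{n+1}▷A_{n+1})]`;
`R_{2n+2} := R_{2n+1}[B_n/B_n∧(A_{n+1}▷B_{n+1}); ◇A_{n+1}/¬(A_{n+1}▷¬C_{n+1});
     (E_{n+1}▷A_{n+1})/(E_{n+1}▷A_{n+1})∧(E_{n+1}▷B_{n+1}∧□C_{n+1})]`. -/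
def Rser : ℕ → ILForm
  | 0 => (Av 0 ▷ Bv 0) ⟹ ((∼(Av 0 ▷ (∼(Cv 0)))) ▷ ((Bv 0) ⋀ (□(Cv 0))))
  | n+1 =>
    let k := n / 2
    if n % 2 = 0 then
      ILForm.replL
        [ (∼(Av k ▷ (∼(Cv k))), (∼(Av k ▷ (∼(Cv k)))) ⋀ (Ev (k+1) ▷ (◇(Av (k+1))))),
          ((Bv k) ⋀ (□(Cv k)), ((Bv k) ⋀ (□(Cv k))) ⋀ (Ev (k+1) ▷ Av (k+1))) ]
        (Rser n)
    else
      ILForm.replL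
        [ (Bv k, (Bv k) ⋀ (Av (k+1) ▷ Bv (k+1))),
          (◇(Av (k+1)), ∼(Av (k+1) ▷ (∼(Cv (k+1))))),
          (Ev (k+1) ▷ Av (k+1),
            (Ev (k+1) ▷ Av (k+1)) ⋀ (Ev (k+1) ▷ ((Bv (k+1)) ⋀ (□(Cv (k+1)))))) ]
        (Rser n)

/-- The formulas `X_n` of the well-behaved subhierarchy. -/
def Xt (A B : ℕ → ILForm) : ℕ → ILForm
  | 0 => A 0 ▷ B 0
  | n+1 => A (n+1) ▷ ((B (n+1)) ⋀ (Xt A B n))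

/-- The formulas `Y_n` of the well-behaved subhierarchy. -/
def Yt (A C E : ℕ → ILForm) : ℕ → ILForm
  | 0 => ∼(A 0 ▷ (∼(C 0)))
  | n+1 => (∼(A (n+1) ▷ (∼(C (n+1))))) ⋀ (E (n+1) ▷ (Yt A C E n))

/-- The formulas `Z_n` of the well-behaved subhierarchy. -/
def Zt (A B C E : ℕ → ILForm) : ℕ → ILForm
  | 0 => (B 0) ⋀ (□(C 0))
  | n+1 => (((B (n+1)) ⋀ (Xt A B n)) ⋀ (□(C (n+1)))) ⋀
             ((E (n+1) ▷ A n) ⋀ (E (n+1) ▷ (Zt A B C E n)))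

/-- The principles `R̃_n = X_n → Y_n ▷ Z_n`. -/
def Rtilde (A B C E : ℕ → ILForm) (n : ℕ) : ILForm :=
  (Xt A B n) ⟹ ((Yt A C E n) ▷ (Zt A B C E n))

/-- `X_{k-1}`, with the convention `X_{-1} = ⊤`. -/
def Xminus (A B : ℕ → ILForm) : ℕ → ILForm
  | 0 => ILForm.top
  | n+1 => Xt A B n

/-- `A_{k-1}`, with the convention `A_{-1} = ⊤`. -/
def Aminus (A : ℕ → ILForm) : ℕ → ILForm
  | 0 => ILForm.top
  | n+1 => A n

/-- `Z_{k-1}`, with the convention `Z_{-1} = ⊤`. -/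
def Zminus (A B C E : ℕ → ILForm) : ℕ → ILForm
  | 0 => ILForm.top
  | n+1 => Zt A B C E n

/-- Veltman frames. -/
structure Veltman where
  W : Type
  ne : Nonempty W
  R : W → W → Prop
  S : W → W → W → Prop
  R_trans : ∀ {x y z}, R x y → R y z → R x z
  R_cwf : WellFounded (fun x y => R y x)
  S_dom : ∀ {x y z}, S x y z → R x y ∧ R x z
  S_refl : ∀ {x y}, R x y → S x y y
  S_trans : ∀ {x y z u}, S x y z → S x z u → S x y u
  R_sub_S : ∀ {x y z}, R x y → R y z → S x y z

/-- Forcing in a Veltman model. -/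
def force (F : Veltman) (V : ℕ → F.W → Prop) : ILForm → F.W → Prop
  | .var n => fun w => V n w
  | .bot => fun _ => False
  | .impl a b => fun w => force F V a w → force F V b w
  | .box a => fun w => ∀ v, F.R w v → force F V a v
  | .rhd a b => fun w => ∀ v, F.R w v → force F V a v →
      ∃ u, F.S w v u ∧ force F V b u

/-- A formula is valid on a frame if it is forced at every world under every valuation. -/
def valid (F : Veltman) (A : ILForm) : Prop := ∀ (V : ℕ → F.W → Prop) (w : F.W), force F V A w

/-- The `C`-assuring successor relation `x R^C_⊩ y`. -/
def RC (F : Veltman) (V : ℕ → F.W → Prop) (C : ILForm) (x y : F.W) : Prop :=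
  F.R x y ∧ force F V C y ∧ ∀ z, F.S x y z → force F V C z

/-- The ternary relations `G_n` on a Veltman frame. -/
def G (F : Veltman) : ℕ → F.W → F.W → F.W → Prop
  | 0 => fun x y z => ∀ u, F.R z u → F.S x y u
  | n+1 => fun x y z => ∀ u, F.R z u → F.S x y u ∧ ∀ v, F.S x u v → G F n z u v

/-- The frame conditions `F_n` of the slim hierarchy. -/
def Fcond (F : Veltman) (n : ℕ) : Prop :=
  ∀ w x y z, F.R w x → F.R x y → F.S w y z → G F n x y z

/-- The quaternary relations `B_n` on a Veltman frame. -/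
def Bq (F : Veltman) : ℕ → F.W → F.W → F.W → F.W → Prop
  | 0 => fun x1 x0 y0 y1 => F.R x1 x0 ∧ F.R x0 y0 ∧ F.S x1 y0 y1
  | n+1 => fun x' x0 y0 y' => ∃ xn yn, F.R x' xn ∧ Bq F n xn x0 y0 yn ∧ F.S x' yn y'

/-- The formulas `U_n` of the broad series (with `U_0 := ⊤`, unused). -/
def Ubr (C : ILForm) (D : ℕ → ILForm) : ℕ → ILForm
  | 0 => ILForm.top
  | 1 => ◇(∼(D 1 ▷ (∼C)))
  | n+2 => ◇(((D (n+1)) ▷ (D (n+2))) ⋀ (Ubr C D (n+1)))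

/-- The frame conditions `F^n` of the broad series. -/
def FbroadCond (F : Veltman) (n : ℕ) : Prop :=
  ∀ x1 x0 y0 y1, Bq F n x1 x0 y0 y1 → ∀ u, F.R y1 u → F.S x0 y0 u

/-- The principles `R^n` of the broad series. -/
def Rbroad (A B C : ILForm) (D : ℕ → ILForm) : ℕ → ILForm
  | 0 => (A ▷ B) ⟹ ((∼(A ▷ (∼C))) ▷ (B ⋀ (□C)))
  | n+1 => (A ▷ B) ⟹ (((Ubr C D (n+1)) ⋀ (D (n+1) ▷ A)) ▷ (B ⋀ (□C)))


section Aux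

variable (F : Veltman) (V : ℕ → F.W → Prop)

lemma fconj_intro {A B : ILForm} {w : F.W} (ha : force F V A w) (hb : force F V B w) :
    force F V (A ⋀ B) w := by
  intro h; exact h ha hb

lemma fconj_fst {A B : ILForm} {w : F.W} (h : force F V (A ⋀ B) w) : force F V A w := by
  by_contra ha; exact h fun hA _ => ha hA

lemma fconj_snd {A B : ILForm} {w : F.W} (h : force F V (A ⋀ B) w) : force F V B w := by
  by_contra hb; exact h fun _ hB => hb hB

lemma force_top (w : F.W) : force F V ILForm.top w := by
  intro h; exact h

lemma neg_rhd_elim (A C : ILForm) (x : F.W) (h : force F V (∼(A ▷ (∼C))) x) :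
    ∃ u, F.R x u ∧ force F V A u ∧ ∀ s, F.S x u s → force F V C s := by
  by_contra hc
  push_neg at hc
  apply h
  intro u hR hA
  obtain ⟨s, hS, hnC⟩ := hc u hR hA
  exact ⟨s, hS, hnC⟩

lemma Yt_neg (A C E : ℕ → ILForm) (k : ℕ) (x : F.W) (h : force F V (Yt A C E k) x) :
    force F V (∼((A k) ▷ (∼(C k)))) x := by
  cases k with
  | zero => exact h
  | succ m =>
    exact fconj_fst F V (A := ∼((A (m+1)) ▷ (∼(C (m+1))))) (B := (E (m+1)) ▷ (Yt A C E m)) h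

lemma Xt_elim (A B : ℕ → ILForm) (k : ℕ) (z : F.W) (h : force F V (Xt A B k) z) :
    ∀ u, F.R z u → force F V (A k) u →
      ∃ t, F.S z u t ∧ force F V (B k) t ∧ force F V (Xminus A B k) t := by
  cases k with
  | zero =>
    intro u hR hA
    obtain ⟨t, hst, hB⟩ := h u hR hA
    exact ⟨t, hst, hB, force_top F V t⟩
  | succ n =>
    intro u hR hA
    obtain ⟨t, hst, hBX⟩ := h u hR hA
    exact ⟨t, hst, fconj_fst F V hBX, fconj_snd F V hBX⟩

lemma Zt_intro (A B C E : ℕ → ILForm) (k : ℕ) (t : F.W)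
    (hB : force F V (B k) t) (hX : force F V (Xminus A B k) t)
    (hbox : force F V (□(C k)) t)
    (hEA : force F V ((E k) ▷ (Aminus A k)) t)
    (hEZ : force F V ((E k) ▷ (Zminus A B C E k)) t) :
    force F V (Zt A B C E k) t := by
  cases k with
  | zero => exact fconj_intro F V hB hbox
  | succ m =>
    exact fconj_intro F V (fconj_intro F V (fconj_intro F V hB hX) hbox)
      (fconj_intro F V hEA hEZ)

end Aux

/-- If `G_{2k}(x,y,z)` then, for any forcing relation with
`x ⊩ Y_k`, `x R^{C_k} y` and `z ⊩ X_{k-1}`, also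
`z ⊩ □C_k ∧ (E_k ▷ A_{k-1}) ∧ (E_k ▷ Z_{k-1})`. -/
theorem stmt7 (F : Veltman) (A B C E : ℕ → ILForm) (k : ℕ) (x y z : F.W)
    (hG : G F (2*k) x y z) (V : ℕ → F.W → Prop)
    (hY : force F V (Yt A C E k) x)
    (hRC : RC F V (C k) x y)
    (hX : force F V (Xminus A B k) z) :
    force F V (((□(C k)) ⋀ (E k ▷ (Aminus A k))) ⋀ (E k ▷ (Zminus A B C E k))) z := by
  revert x y z
  induction k with
  | zero =>
    intro x y z hG hY hRC hX
    refine fconj_intro F V (fconj_intro F V ?_ ?_) ?_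
    · intro u hzu
      exact hRC.2.2 u (hG u hzu)
    · intro v hzv _
      exact ⟨v, F.S_refl hzv, force_top F V v⟩
    · intro v hzv _
      exact ⟨v, F.S_refl hzv, force_top F V v⟩
  | succ n ih =>
    intro x y z hG hY hRC hX
    have e : 2*(n+1) = (2*n+1)+1 := by ring
    rw [e] at hG
    have hYE : force F V ((E (n+1)) ▷ (Yt A C E n)) x :=
      fconj_snd F V (A := ∼((A (n+1)) ▷ (∼(C (n+1))))) (B := (E (n+1)) ▷ (Yt A C E n)) hY
    have key : ∀ v, F.R z v → force F V (E (n+1)) v →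
        ∃ u t, F.S z v u ∧ force F V (A n) u ∧ F.S z u t ∧
          force F V (Zt A B C E n) t := by
      intro v hzv hEv
      obtain ⟨hSxyv, hrec⟩ := hG v hzv
      have hRxv : F.R x v := (F.S_dom hSxyv).2
      obtain ⟨w, hSxvw, hYw⟩ := hYE v hRxv hEv
      have hG1 : G F (2*n+1) z v w := hrec w hSxvw
      obtain ⟨u, hwu, hAu, hCs⟩ := neg_rhd_elim F V (A n) (C n) w (Yt_neg F V A C E n w hYw)
      obtain ⟨hSzvu, hrec2⟩ := hG1 u hwu
      have hRzu : F.R z u := (F.S_dom hSzvu).2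
      obtain ⟨t, hSzut, hBt, hXt⟩ := Xt_elim F V A B n z hX u hRzu hAu
      have hG0 : G F (2*n) w u t := hrec2 t hSzut
      have hRCwu : RC F V (C n) w u := ⟨hwu, hCs u (F.S_refl hwu), hCs⟩
      have hIH := ih w u t hG0 hYw hRCwu hXt
      refine ⟨u, t, hSzvu, hAu, hSzut, Zt_intro F V A B C E n t hBt hXt ?_ ?_ ?_⟩
      · exact fconj_fst F V (fconj_fst F V hIH)
      · exact fconj_snd F V (fconj_fst F V hIH)
      · exact fconj_snd F V hIH
    refine fconj_intro F V (fconj_intro F V ?_ ?_) ?_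
    · intro u hzu
      exact hRC.2.2 u (hG u hzu).1
    · intro v hzv hEv
      obtain ⟨u, t, hSzvu, hAu, _, _⟩ := key v hzv hEv
      exact ⟨u, hSzvu, hAu⟩
    · intro v hzv hEv
      obtain ⟨u, t, hSzvu, _, hSzut, hZt⟩ := key v hzv hEv
      exact ⟨t, F.S_trans hSzvu hSzut, hZt⟩
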